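/- arXiv:2305.13027 — 4 statements merged into one kernel-verified Lean document; each statement's English description precedes it below -/
import Mathlib

section
/- The cliques of order 11 in the triangular graph T(12) are exactly the 12 'stars': for each element a of the 12-element ground set, the set {s : a ∈ s} of all 2-element subsets containing a is a clique of order 11, and every clique of order 11 in T(12) is of this form. -/
set_option maxRecDepth 10000

/-- The triangular graph T(12): vertices are the 2-element subsets of `Fin 12`,
two distinct vertices being adjacent iff they share exactly one point. -/
def T12 : SimpleGraph {s : Finset (Fin 12) // s.card = 2} where
  Adj s t := s ≠ t ∧ (s.1 ∩ t.1).card = 1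
  symm := by
    constructor
    intro s t h
    exact ⟨h.1.symm, by rw [Finset.inter_comm]; exact h.2⟩
  loopless := by
    constructor
    intro s h
    exact h.1 rfl

/-- The star of `a`: all 2-element subsets of `Fin 12` containing `a`. -/
def star12 (a : Fin 12) : Finset {s : Finset (Fin 12) // s.card = 2} :=
  Finset.univ.filter (fun s => a ∈ s.1)

lemma mem_star12 {a : Fin 12} {s : {s : Finset (Fin 12) // s.card = 2}} :
    s ∈ star12 a ↔ a ∈ s.1 := by simp [star12]

lemma card_star12 (a : Fin 12) : (star12 a).card = 11 := by fin_cases a <;> decide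

/-- a 2-element set containing two distinct elements a, b equals {a, b}. -/
lemma pair_rep {x : Finset (Fin 12)} (hx : x.card = 2) {a b : Fin 12}
    (hab : a ≠ b) (ha : a ∈ x) (hb : b ∈ x) : x = {a, b} := by
  have hsub : ({a, b} : Finset (Fin 12)) ⊆ x := by
    intro z hz
    rcases Finset.mem_insert.mp hz with rfl | hz
    · exact ha
    · rcases Finset.mem_singleton.mp hz with rfl; exact hb
  exact (Finset.eq_of_subset_of_card_le hsub (by rw [hx, Finset.card_pair hab])).symm

lemma pair_eq {x y : Finset (Fin 12)} (hx : x.card = 2) (hy : y.card = 2)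
    {a b : Fin 12} (hab : a ≠ b) (hax : a ∈ x) (hbx : b ∈ x)
    (hay : a ∈ y) (hby : b ∈ y) : x = y := by
  rw [pair_rep hx hab hax hbx, pair_rep hy hab hay hby]

/-- The cliques of order 11 in T(12) are exactly the 12 stars. -/
theorem T12_elevenCliques_eq_stars (K : Finset {s : Finset (Fin 12) // s.card = 2}) :
    T12.IsNClique 11 K ↔ ∃ a : Fin 12, K = star12 a := by
  constructor
  · rintro ⟨hclique, hcard⟩
    -- adjacency fact
    have hadj : ∀ s ∈ K, ∀ t ∈ K, s ≠ t → (s.1 ∩ t.1).card = 1 := by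
      intro s hs t ht hst
      exact (hclique hs ht hst).2
    -- pick two distinct elements
    obtain ⟨s, hs, t, ht, hst⟩ := Finset.one_lt_card.mp (by omega : 1 < K.card)
    obtain ⟨a, hst_a⟩ := Finset.card_eq_one.mp (hadj s hs t ht hst)
    have has : a ∈ s.1 := by
      have := Finset.mem_singleton_self a; rw [← hst_a] at this
      exact (Finset.mem_inter.mp this).1
    have hat : a ∈ t.1 := by
      have := Finset.mem_singleton_self a; rw [← hst_a] at this
      exact (Finset.mem_inter.mp this).2
    -- claim: a belongs to every member of K
    have key : ∀ u ∈ K, a ∈ u.1 := by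
      by_contra hcon
      push_neg at hcon
      obtain ⟨u, huK, hau⟩ := hcon
      have hus : u ≠ s := fun h => hau (h ▸ has)
      have hut : u ≠ t := fun h => hau (h ▸ hat)
      obtain ⟨b, hb⟩ := Finset.card_eq_one.mp (hadj u huK s hs hus)
      obtain ⟨c, hc⟩ := Finset.card_eq_one.mp (hadj u huK t ht hut)
      have hbu : b ∈ u.1 := by
        have := Finset.mem_singleton_self b; rw [← hb] at this
        exact (Finset.mem_inter.mp this).1
      have hbs : b ∈ s.1 := by
        have := Finset.mem_singleton_self b; rw [← hb] at this
        exact (Finset.mem_inter.mp this).2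
      have hcu : c ∈ u.1 := by
        have := Finset.mem_singleton_self c; rw [← hc] at this
        exact (Finset.mem_inter.mp this).1
      have hct : c ∈ t.1 := by
        have := Finset.mem_singleton_self c; rw [← hc] at this
        exact (Finset.mem_inter.mp this).2
      have hba : b ≠ a := fun h => hau (h ▸ hbu)
      have hca : c ≠ a := fun h => hau (h ▸ hcu)
      have hbc : b ≠ c := by
        intro h
        subst h
        have : b ∈ s.1 ∩ t.1 := Finset.mem_inter.mpr ⟨hbs, hct⟩
        rw [hst_a, Finset.mem_singleton] at this
        exact hba this
      have hu_rep : u.1 = {b, c} := pair_rep u.2 hbc hbu hcu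
      have hs_rep : s.1 = {a, b} := pair_rep s.2 (Ne.symm hba) has hbs
      have ht_rep : t.1 = {a, c} := pair_rep t.2 (Ne.symm hca) hat hct
      -- find a fourth vertex
      have hK4 : (K \ {s, t, u}).Nonempty := by
        rw [← Finset.card_pos]
        have h1 : K.card ≤ (K \ {s, t, u}).card + ({s, t, u} : Finset _).card :=
          Finset.card_le_card_sdiff_add_card
        have h2 : ({s, t, u} : Finset _).card ≤ 3 := by
          apply le_trans (Finset.card_insert_le _ _)
          simp [Finset.card_insert_le]
          exact Nat.lt_succ_of_le Finset.card_le_two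
        omega
      obtain ⟨v, hv⟩ := hK4
      rw [Finset.mem_sdiff] at hv
      obtain ⟨hvK, hvnot⟩ := hv
      simp only [Finset.mem_insert, Finset.mem_singleton, not_or] at hvnot
      obtain ⟨hvs, hvt, hvu⟩ := hvnot
      by_cases hav : a ∈ v.1
      · -- v contains a; v ∩ u = {d}, d ∈ {b,c}
        obtain ⟨d, hd⟩ := Finset.card_eq_one.mp (hadj v hvK u huK hvu)
        have hdv : d ∈ v.1 := by
          have := Finset.mem_singleton_self d; rw [← hd] at this
          exact (Finset.mem_inter.mp this).1
        have hdu : d ∈ u.1 := by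
          have := Finset.mem_singleton_self d; rw [← hd] at this
          exact (Finset.mem_inter.mp this).2
        rw [hu_rep, Finset.mem_insert, Finset.mem_singleton] at hdu
        rcases hdu with rfl | rfl
        · exact hvs (Subtype.ext (pair_eq v.2 s.2 (Ne.symm hba) hav hdv has hbs))
        · exact hvt (Subtype.ext (pair_eq v.2 t.2 (Ne.symm hca) hav hdv hat hct))
      · -- v avoids a: same argument as for u gives v = u
        obtain ⟨b', hb'⟩ := Finset.card_eq_one.mp (hadj v hvK s hs hvs)
        obtain ⟨c', hc'⟩ := Finset.card_eq_one.mp (hadj v hvK t ht hvt)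
        have hb'v : b' ∈ v.1 := by
          have := Finset.mem_singleton_self b'; rw [← hb'] at this
          exact (Finset.mem_inter.mp this).1
        have hb's : b' ∈ s.1 := by
          have := Finset.mem_singleton_self b'; rw [← hb'] at this
          exact (Finset.mem_inter.mp this).2
        have hc'v : c' ∈ v.1 := by
          have := Finset.mem_singleton_self c'; rw [← hc'] at this
          exact (Finset.mem_inter.mp this).1
        have hc't : c' ∈ t.1 := by
          have := Finset.mem_singleton_self c'; rw [← hc'] at this
          exact (Finset.mem_inter.mp this).2
        have hb'b : b' = b := by
          rw [hs_rep, Finset.mem_insert, Finset.mem_singleton] at hb's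
          rcases hb's with rfl | rfl
          · exact absurd hb'v hav
          · rfl
        have hc'c : c' = c := by
          rw [ht_rep, Finset.mem_insert, Finset.mem_singleton] at hc't
          rcases hc't with rfl | rfl
          · exact absurd hc'v hav
          · rfl
        subst hb'b; subst hc'c
        exact hvu (Subtype.ext (pair_eq v.2 u.2 hbc hb'v hc'v hbu hcu))
    -- now K ⊆ star12 a with equal cards
    refine ⟨a, Finset.eq_of_subset_of_card_le ?_ ?_⟩
    · intro u hu; exact mem_star12.mpr (key u hu)
    · rw [card_star12, hcard]
  · rintro ⟨a, rfl⟩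
    constructor
    · intro s hs t ht hst
      refine ⟨hst, ?_⟩
      have has : a ∈ s.1 := mem_star12.mp hs
      have hat : a ∈ t.1 := mem_star12.mp ht
      have : s.1 ∩ t.1 = {a} := by
        apply Finset.eq_singleton_iff_unique_mem.mpr
        refine ⟨Finset.mem_inter.mpr ⟨has, hat⟩, ?_⟩
        intro x hx
        rw [Finset.mem_inter] at hx
        by_contra hxa
        exact hst (Subtype.ext (pair_eq s.2 t.2 hxa hx.1 has hx.2 hat))
      rw [this, Finset.card_singleton]
    · exact card_star12 a
end

section
/- Let x : Fin 11 → ℝ^10 be a regular 11-simplex. For every function ε : Fin 11 → ℝ with ε 0 = α2 that takes the value α1 at exactly six indices, the value α2 at exactly two indices (including the index 0), and the value α3 at exactly three indices, there exists exactly one unit vector y ∈ ℝ^10 with ⟨x i, y⟩ = ε i for all i. Consequently, the set Y1 has exactly 840 elements. -/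
open RealInnerProductSpace

set_option maxRecDepth 8000

noncomputable section

/-- The three admissible inner product values (angles). -/
def α1 : ℝ := 4/15
def α2 : ℝ := -1/10
def α3 : ℝ := -7/15

/-- A regular 11-simplex in ℝ^10: eleven unit vectors with pairwise inner
products equal to -1/10. -/
def IsRegularSimplex (x : Fin 11 → EuclideanSpace ℝ (Fin 10)) : Prop :=
  (∀ i, ‖x i‖ = 1) ∧ ∀ i j : Fin 11, i ≠ j → ⟪x i, x j⟫ = -1/10

/-- The set `Y1`: unit vectors `y` with `⟪x 0, y⟫ = α2` such that among the
indices `i ≠ 0`, exactly six satisfy `⟪x i, y⟫ = α1`, exactly one satisfies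
`⟪x i, y⟫ = α2`, and exactly three satisfy `⟪x i, y⟫ = α3`. -/
def Y1set (x : Fin 11 → EuclideanSpace ℝ (Fin 10)) : Set (EuclideanSpace ℝ (Fin 10)) :=
  {y | ‖y‖ = 1 ∧ ⟪x 0, y⟫ = α2 ∧
    {i : Fin 11 | i ≠ 0 ∧ ⟪x i, y⟫ = α1}.ncard = 6 ∧
    {i : Fin 11 | i ≠ 0 ∧ ⟪x i, y⟫ = α2}.ncard = 1 ∧
    {i : Fin 11 | i ≠ 0 ∧ ⟪x i, y⟫ = α3}.ncard = 3}

namespace Y1aux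

open Finset

lemma a12 : α1 ≠ α2 := by norm_num [α1, α2]
lemma a13 : α1 ≠ α3 := by norm_num [α1, α3]
lemma a23 : α2 ≠ α3 := by norm_num [α2, α3]

lemma ncard_setOf {α : Type*} [Fintype α] (p : α → Prop) [DecidablePred p] :
    {i | p i}.ncard = (univ.filter p).card := by
  rw [Set.ncard_eq_toFinset_card']
  simp [Set.toFinset_setOf]

open Classical in
lemma union_eq (ε : Fin 11 → ℝ)
    (h1 : {i | ε i = α1}.ncard = 6) (h2 : {i | ε i = α2}.ncard = 2)
    (h3 : {i | ε i = α3}.ncard = 3) :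
    (univ.filter (fun i => ε i = α1)) ∪ (univ.filter (fun i => ε i = α2))
      ∪ (univ.filter (fun i => ε i = α3)) = (univ : Finset (Fin 11)) := by
  classical
  apply Finset.eq_univ_of_card
  have d12 : Disjoint (univ.filter (fun i => ε i = α1)) (univ.filter (fun i => ε i = α2)) := by
    simp only [Finset.disjoint_filter]
    intro i _ hi hi'
    exact a12 (hi ▸ hi')
  have d13 : Disjoint (univ.filter (fun i => ε i = α1) ∪ univ.filter (fun i => ε i = α2))
      (univ.filter (fun i => ε i = α3)) := by
    rw [Finset.disjoint_union_left]
    constructor <;> (simp only [Finset.disjoint_filter]; intro i _ hi hi')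
    · exact a13 (hi ▸ hi')
    · exact a23 (hi ▸ hi')
  rw [Finset.card_union_of_disjoint d13, Finset.card_union_of_disjoint d12]
  rw [ncard_setOf] at h1 h2 h3
  rw [h1, h2, h3]; rfl

open Classical in
lemma tri (ε : Fin 11 → ℝ)
    (h1 : {i | ε i = α1}.ncard = 6) (h2 : {i | ε i = α2}.ncard = 2)
    (h3 : {i | ε i = α3}.ncard = 3) :
    ∀ i, ε i = α1 ∨ ε i = α2 ∨ ε i = α3 := by
  classical
  intro i
  have := union_eq ε h1 h2 h3
  have hi : i ∈ (univ : Finset (Fin 11)) := mem_univ i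
  rw [← this] at hi
  simp only [Finset.mem_union, Finset.mem_filter] at hi
  tauto

lemma sum_f (ε : Fin 11 → ℝ)
    (h1 : {i | ε i = α1}.ncard = 6) (h2 : {i | ε i = α2}.ncard = 2)
    (h3 : {i | ε i = α3}.ncard = 3) (f : ℝ → ℝ) :
    ∑ i, f (ε i) = 6 * f α1 + 2 * f α2 + 3 * f α3 := by
  classical
  have hu := union_eq ε h1 h2 h3
  have d12 : Disjoint (univ.filter (fun i => ε i = α1)) (univ.filter (fun i => ε i = α2)) := by
    simp only [Finset.disjoint_filter]; intro i _ hi hi'; exact a12 (hi ▸ hi')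
  have d13 : Disjoint (univ.filter (fun i => ε i = α1) ∪ univ.filter (fun i => ε i = α2))
      (univ.filter (fun i => ε i = α3)) := by
    rw [Finset.disjoint_union_left]
    constructor <;> (simp only [Finset.disjoint_filter]; intro i _ hi hi')
    · exact a13 (hi ▸ hi')
    · exact a23 (hi ▸ hi')
  rw [ncard_setOf] at h1 h2 h3
  calc ∑ i, f (ε i) = ∑ i ∈ (univ.filter (fun i => ε i = α1)) ∪ (univ.filter (fun i => ε i = α2))
      ∪ (univ.filter (fun i => ε i = α3)), f (ε i) := by rw [hu]
    _ = 6 * f α1 + 2 * f α2 + 3 * f α3 := by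
        rw [Finset.sum_union d13, Finset.sum_union d12]
        have e1 : ∑ i ∈ univ.filter (fun i => ε i = α1), f (ε i) = 6 * f α1 := by
          rw [Finset.sum_congr rfl (fun i hi => by rw [(Finset.mem_filter.1 hi).2]),
            Finset.sum_const, h1]
          simp [mul_comm]
        have e2 : ∑ i ∈ univ.filter (fun i => ε i = α2), f (ε i) = 2 * f α2 := by
          rw [Finset.sum_congr rfl (fun i hi => by rw [(Finset.mem_filter.1 hi).2]),
            Finset.sum_const, h2]
          simp [mul_comm]
        have e3 : ∑ i ∈ univ.filter (fun i => ε i = α3), f (ε i) = 3 * f α3 := by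
          rw [Finset.sum_congr rfl (fun i hi => by rw [(Finset.mem_filter.1 hi).2]),
            Finset.sum_const, h3]
          simp [mul_comm]
        rw [e1, e2, e3]

lemma sum_eps (ε : Fin 11 → ℝ)
    (h1 : {i | ε i = α1}.ncard = 6) (h2 : {i | ε i = α2}.ncard = 2)
    (h3 : {i | ε i = α3}.ncard = 3) : ∑ i, ε i = 0 := by
  have := sum_f ε h1 h2 h3 (fun t => t)
  norm_num [α1, α2, α3] at this
  simpa using this

lemma sum_eps_sq (ε : Fin 11 → ℝ)
    (h1 : {i | ε i = α1}.ncard = 6) (h2 : {i | ε i = α2}.ncard = 2)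
    (h3 : {i | ε i = α3}.ncard = 3) : ∑ i, ε i * ε i = 11/10 := by
  have := sum_f ε h1 h2 h3 (fun t => t * t)
  rw [this]
  norm_num [α1, α2, α3]

/-- The candidate vector realizing the pattern `ε`. -/
def Fy (x : Fin 11 → EuclideanSpace ℝ (Fin 10)) (ε : Fin 11 → ℝ) :
    EuclideanSpace ℝ (Fin 10) := (10/11 : ℝ) • ∑ i, ε i • x i

lemma inner_Fy (x : Fin 11 → EuclideanSpace ℝ (Fin 10)) (hx : IsRegularSimplex x)
    (ε : Fin 11 → ℝ) (hsum : ∑ i, ε i = 0) (j : Fin 11) :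
    ⟪x j, Fy x ε⟫ = ε j := by
  have h : ∀ i, ⟪x j, ε i • x i⟫ = ε i * ⟪x j, x i⟫ := fun i => real_inner_smul_right _ _ _
  rw [Fy, real_inner_smul_right, inner_sum]
  simp only [h]
  have key : ∑ i, ε i * ⟪x j, x i⟫ = 11/10 * ε j := by
    rw [← Finset.add_sum_erase _ _ (mem_univ j)]
    have hjj : ⟪x j, x j⟫ = 1 := by
      rw [real_inner_self_eq_norm_mul_norm, hx.1 j]; norm_num
    have he : ∑ i ∈ univ.erase j, ε i * ⟪x j, x i⟫ = ∑ i ∈ univ.erase j, ε i * (-1/10) := by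
      refine Finset.sum_congr rfl fun i hi => ?_
      rw [hx.2 j i (Ne.symm (Finset.mem_erase.1 hi).1)]
    rw [hjj, he, ← Finset.sum_mul, Finset.sum_erase_eq_sub (mem_univ j), hsum]
    ring
  rw [key]; ring

lemma norm_Fy (x : Fin 11 → EuclideanSpace ℝ (Fin 10)) (hx : IsRegularSimplex x)
    (ε : Fin 11 → ℝ) (hsum : ∑ i, ε i = 0) (hsq : ∑ i, ε i * ε i = 11/10) :
    ‖Fy x ε‖ = 1 := by
  have h : ⟪Fy x ε, Fy x ε⟫ = 1 := by
    nth_rewrite 1 [Fy]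
    rw [real_inner_smul_left, sum_inner]
    have : ∀ i ∈ univ, ⟪ε i • x i, Fy x ε⟫ = ε i * ε i := by
      intro i _
      rw [real_inner_smul_left, inner_Fy x hx ε hsum]
    rw [Finset.sum_congr rfl this, hsq]
    norm_num
  have := real_inner_self_eq_norm_sq (Fy x ε) ▸ h
  nlinarith [norm_nonneg (Fy x ε)]

lemma eq_Fy (x : Fin 11 → EuclideanSpace ℝ (Fin 10)) (hx : IsRegularSimplex x)
    (ε : Fin 11 → ℝ) (hsum : ∑ i, ε i = 0) (hsq : ∑ i, ε i * ε i = 11/10)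
    (y : EuclideanSpace ℝ (Fin 10)) (hy : ‖y‖ = 1) (hyi : ∀ i, ⟪x i, y⟫ = ε i) :
    y = Fy x ε := by
  have hinner : ⟪Fy x ε, y⟫ = 1 := by
    nth_rewrite 1 [Fy]
    rw [real_inner_smul_left, sum_inner]
    have : ∀ i ∈ univ, ⟪ε i • x i, y⟫ = ε i * ε i := by
      intro i _
      rw [real_inner_smul_left, hyi i]
    rw [Finset.sum_congr rfl this, hsq]
    norm_num
  have hF : ‖Fy x ε‖ = 1 := norm_Fy x hx ε hsum hsq
  have h0 : ⟪y - Fy x ε, y - Fy x ε⟫ = 0 := by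
    rw [inner_sub_sub_self]
    rw [real_inner_self_eq_norm_sq, real_inner_self_eq_norm_sq, hy, hF,
      real_inner_comm (Fy x ε) y] at *
    rw [hinner]
    ring
  have h1 : y - Fy x ε = 0 := inner_self_eq_zero.1 h0
  exact sub_eq_zero.1 h1

/-- Admissible patterns. -/
def Sset : Set (Fin 11 → ℝ) :=
  {ε | ε 0 = α2 ∧ {i | ε i = α1}.ncard = 6 ∧ {i | ε i = α2}.ncard = 2 ∧
    {i | ε i = α3}.ncard = 3}

def Gfun (A C : Finset (Fin 11)) : Fin 11 → ℝ :=
  fun i => if i ∈ A then α1 else if i ∈ C then α3 else α2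

def Tfin : Finset (Finset (Fin 11) × Finset (Fin 11)) :=
  ((univ.erase 0).powersetCard 6).biUnion
    (fun A => (((univ.erase 0) \ A).powersetCard 3).image (fun C => (A, C)))

lemma Tfin_card : Tfin.card = 840 := by
  rw [Tfin, Finset.card_biUnion]
  · have h : ∀ A ∈ (univ.erase (0:Fin 11)).powersetCard 6,
        ((((univ.erase 0) \ A).powersetCard 3).image (fun C => (A, C))).card = 4 := by
      intro A hA
      rw [Finset.card_image_of_injective _ (fun C C' h => by simpa using h)]
      rw [Finset.card_powersetCard]
      obtain ⟨hsub, hcard⟩ := Finset.mem_powersetCard.1 hA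
      rw [Finset.card_sdiff_of_subset hsub, hcard]
      rw [Finset.card_erase_of_mem (mem_univ _), Finset.card_univ]
      rfl
    rw [Finset.sum_congr rfl h, Finset.sum_const, Finset.card_powersetCard,
      Finset.card_erase_of_mem (mem_univ _), Finset.card_univ]
    rfl
  · intro A hA A' hA' hne
    rw [Function.onFun, Finset.disjoint_left]
    intro p hp hp'
    simp only [Finset.mem_image] at hp hp'
    obtain ⟨C, _, rfl⟩ := hp
    obtain ⟨C', _, h⟩ := hp'
    exact hne (by simpa using (Prod.mk.injEq .. ▸ h.symm).1)

lemma mem_Tfin {A C : Finset (Fin 11)} : (A, C) ∈ Tfin ↔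
    0 ∉ A ∧ 0 ∉ C ∧ Disjoint A C ∧ A.card = 6 ∧ C.card = 3 := by
  simp only [Tfin, Finset.mem_biUnion, Finset.mem_image, Finset.mem_powersetCard]
  constructor
  · rintro ⟨A', ⟨hA'sub, hA'card⟩, C', ⟨hC'sub, hC'card⟩, h⟩
    obtain ⟨rfl, rfl⟩ : A' = A ∧ C' = C := Prod.mk.injEq .. ▸ h
    rw [Finset.subset_erase] at hA'sub
    rw [Finset.subset_sdiff, Finset.subset_erase] at hC'sub
    exact ⟨hA'sub.2, hC'sub.1.2, hC'sub.2.symm, hA'card, hC'card⟩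
  · rintro ⟨h0A, h0C, hd, hcA, hcC⟩
    refine ⟨A, ⟨Finset.subset_erase.2 ⟨Finset.subset_univ _, h0A⟩, hcA⟩,
      C, ⟨Finset.subset_sdiff.2 ⟨Finset.subset_erase.2 ⟨Finset.subset_univ _, h0C⟩, hd.symm⟩,
        hcC⟩, rfl⟩

lemma Gfun_mem_Sset {A C : Finset (Fin 11)} (h : (A, C) ∈ Tfin) : Gfun A C ∈ Sset := by
  obtain ⟨h0A, h0C, hd, hcA, hcC⟩ := mem_Tfin.1 h
  have hdis := Finset.disjoint_left.1 hd
  have e1 : {i | Gfun A C i = α1} = (↑A : Set (Fin 11)) := by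
    ext i
    simp only [Set.mem_setOf_eq, Finset.coe_mem, Set.mem_setOf_eq, Finset.mem_coe, Gfun]
    constructor
    · intro hi
      by_contra hiA
      rw [if_neg hiA] at hi
      by_cases hiC : i ∈ C
      · rw [if_pos hiC] at hi; exact a13 hi.symm
      · rw [if_neg hiC] at hi; exact a12 hi.symm
    · intro hi; rw [if_pos hi]
  have e3 : {i | Gfun A C i = α3} = (↑C : Set (Fin 11)) := by
    ext i
    simp only [Set.mem_setOf_eq, Finset.mem_coe, Gfun]
    constructor
    · intro hi
      by_cases hiA : i ∈ A
      · rw [if_pos hiA] at hi; exact absurd hi a13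
      · rw [if_neg hiA] at hi
        by_contra hiC
        rw [if_neg hiC] at hi; exact a23 hi
    · intro hi
      rw [if_neg (fun hiA => hdis hiA hi), if_pos hi]
  have e2 : {i | Gfun A C i = α2} = (↑(univ \ (A ∪ C)) : Set (Fin 11)) := by
    ext i
    simp only [Set.mem_setOf_eq, Finset.coe_sdiff, Finset.coe_union, Set.mem_diff,
      Set.mem_union, Finset.mem_coe, Finset.coe_univ, Set.mem_univ, true_and, Gfun]
    constructor
    · intro hi
      by_cases hiA : i ∈ A
      · rw [if_pos hiA] at hi; exact absurd hi a12
      · by_cases hiC : i ∈ C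
        · rw [if_neg hiA, if_pos hiC] at hi; exact absurd hi.symm a23
        · exact fun h => h.elim hiA hiC
    · intro hi
      rw [if_neg (fun h => hi (Or.inl h)), if_neg (fun h => hi (Or.inr h))]
  refine ⟨?_, ?_, ?_, ?_⟩
  · show Gfun A C 0 = α2
    rw [Gfun, if_neg h0A, if_neg h0C]
  · rw [e1, Set.ncard_coe_finset, hcA]
  · rw [e2, Set.ncard_coe_finset, Finset.card_sdiff_of_subset (Finset.subset_univ _),
      Finset.card_union_of_disjoint hd, hcA, hcC, Finset.card_univ]
    rfl
  · rw [e3, Set.ncard_coe_finset, hcC]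

open Classical in
lemma Sset_eq_image : Sset = (fun p : Finset (Fin 11) × Finset (Fin 11) => Gfun p.1 p.2) '' ↑Tfin := by
  classical
  ext ε
  constructor
  · rintro ⟨h0, h1, h2, h3⟩
    refine ⟨(univ.filter (fun i => ε i = α1), univ.filter (fun i => ε i = α3)), ?_, ?_⟩
    · rw [Finset.mem_coe, mem_Tfin]
      refine ⟨?_, ?_, ?_, ?_, ?_⟩
      · simp only [Finset.mem_filter]; rintro ⟨-, h⟩; exact a12 (h.symm.trans h0)
      · simp only [Finset.mem_filter]; rintro ⟨-, h⟩; exact a23 (h0.symm.trans h)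
      · simp only [Finset.disjoint_filter]; intro i _ hi hi'; exact a13 (hi ▸ hi')
      · rw [← ncard_setOf]; exact h1
      · rw [← ncard_setOf]; exact h3
    · funext i
      simp only [Gfun, Finset.mem_filter, Finset.mem_univ, true_and]
      by_cases hi1 : ε i = α1
      · rw [if_pos hi1, hi1]
      · rw [if_neg hi1]
        by_cases hi3 : ε i = α3
        · rw [if_pos hi3, hi3]
        · rw [if_neg hi3]
          rcases tri ε h1 h2 h3 i with h | h | h
          · exact absurd h hi1
          · exact h.symm
          · exact absurd h hi3
  · rintro ⟨⟨A, C⟩, hT, rfl⟩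
    exact Gfun_mem_Sset (Finset.mem_coe.1 hT)

open Classical in
lemma injOn_Gfun : Set.InjOn (fun p : Finset (Fin 11) × Finset (Fin 11) => Gfun p.1 p.2) ↑Tfin := by
  rintro ⟨A, C⟩ hAC ⟨A', C'⟩ hAC' h
  simp only at h
  obtain ⟨-, -, hd, -, -⟩ := mem_Tfin.1 (Finset.mem_coe.1 hAC)
  obtain ⟨-, -, hd', -, -⟩ := mem_Tfin.1 (Finset.mem_coe.1 hAC')
  have hA : A = A' := by
    ext i
    have := congrFun h i
    simp only [Gfun] at this
    constructor
    · intro hi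
      rw [if_pos hi] at this
      by_contra hi'
      rw [if_neg hi'] at this
      by_cases hiC : i ∈ C'
      · rw [if_pos hiC] at this; exact a13 this
      · rw [if_neg hiC] at this; exact a12 this
    · intro hi
      rw [if_pos hi] at this
      by_contra hi'
      rw [if_neg hi'] at this
      by_cases hiC : i ∈ C
      · rw [if_pos hiC] at this; exact a13 this.symm
      · rw [if_neg hiC] at this; exact a12 this.symm
  have hC : C = C' := by
    subst hA
    ext i
    have := congrFun h i
    simp only [Gfun] at this
    by_cases hiA : i ∈ A
    · constructor
      · intro hi; exact absurd hi (Finset.disjoint_left.1 hd hiA)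
      · intro hi; exact absurd hi (Finset.disjoint_left.1 hd' hiA)
    · rw [if_neg hiA, if_neg hiA] at this
      constructor
      · intro hi
        rw [if_pos hi] at this
        by_contra hi'
        rw [if_neg hi'] at this; exact a23 this.symm
      · intro hi
        rw [if_pos hi] at this
        by_contra hi'
        rw [if_neg hi'] at this; exact a23 this
  rw [hA, hC]

lemma Sset_ncard : Sset.ncard = 840 := by
  rw [Sset_eq_image, Set.ncard_image_of_injOn injOn_Gfun, Set.ncard_coe_finset, Tfin_card]

end Y1aux

open Y1aux Finset in
/-- For every admissible pattern `ε` of inner products (value `α2` at index 0,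
value `α1` at exactly six indices, `α2` at exactly two indices, `α3` at exactly
three indices) there is a unique unit vector realizing it; consequently the set
`Y1` has exactly 840 elements. -/
theorem Y1_pattern_unique_and_card (x : Fin 11 → EuclideanSpace ℝ (Fin 10))
    (hx : IsRegularSimplex x) :
    (∀ ε : Fin 11 → ℝ, ε 0 = α2 →
      {i : Fin 11 | ε i = α1}.ncard = 6 →
      {i : Fin 11 | ε i = α2}.ncard = 2 →
      {i : Fin 11 | ε i = α3}.ncard = 3 →
      ∃! y : EuclideanSpace ℝ (Fin 10), ‖y‖ = 1 ∧ ∀ i, ⟪x i, y⟫ = ε i) ∧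
    (Y1set x).ncard = 840 := by
  constructor
  · intro ε h0 h1 h2 h3
    have hsum := sum_eps ε h1 h2 h3
    have hsq := sum_eps_sq ε h1 h2 h3
    refine ⟨Fy x ε, ⟨norm_Fy x hx ε hsum hsq, inner_Fy x hx ε hsum⟩, ?_⟩
    rintro y ⟨hy, hyi⟩
    exact eq_Fy x hx ε hsum hsq y hy hyi
  · have himg : Y1set x = Fy x '' Sset := by
      ext y
      constructor
      · rintro ⟨hy, h0, h1, h2, h3⟩
        set ε : Fin 11 → ℝ := fun i => ⟪x i, y⟫ with hε
        have he0 : ε 0 = α2 := h0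
        have he1 : {i | ε i = α1}.ncard = 6 := by
          have : {i | ε i = α1} = {i : Fin 11 | i ≠ 0 ∧ ⟪x i, y⟫ = α1} := by
            ext i
            simp only [Set.mem_setOf_eq]
            constructor
            · intro hi
              refine ⟨fun hi0 => ?_, hi⟩
              rw [hi0] at hi
              exact a12 (hi.symm.trans he0)
            · exact fun hi => hi.2
          rw [this]; exact h1
        have he3 : {i | ε i = α3}.ncard = 3 := by
          have : {i | ε i = α3} = {i : Fin 11 | i ≠ 0 ∧ ⟪x i, y⟫ = α3} := by
            ext i
            simp only [Set.mem_setOf_eq]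
            constructor
            · intro hi
              refine ⟨fun hi0 => ?_, hi⟩
              rw [hi0] at hi
              exact a23 (he0.symm.trans hi)
            · exact fun hi => hi.2
          rw [this]; exact h3
        have he2 : {i | ε i = α2}.ncard = 2 := by
          have hins : {i | ε i = α2} = insert 0 {i : Fin 11 | i ≠ 0 ∧ ⟪x i, y⟫ = α2} := by
            ext i
            simp only [Set.mem_setOf_eq, Set.mem_insert_iff]
            constructor
            · intro hi
              by_cases hi0 : i = 0
              · exact Or.inl hi0
              · exact Or.inr ⟨hi0, hi⟩
            · rintro (rfl | ⟨-, hi⟩)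
              · exact he0
              · exact hi
          rw [hins, Set.ncard_insert_of_notMem (by simp) (Set.toFinite _), h2]
        have hSm : ε ∈ Sset := ⟨he0, he1, he2, he3⟩
        refine ⟨ε, hSm, ?_⟩
        exact (eq_Fy x hx ε (sum_eps ε he1 he2 he3) (sum_eps_sq ε he1 he2 he3) y hy
          (fun i => rfl)).symm
      · rintro ⟨ε, ⟨he0, he1, he2, he3⟩, rfl⟩
        have hsum := sum_eps ε he1 he2 he3
        have hsq := sum_eps_sq ε he1 he2 he3
        have hin : ∀ i, ⟪x i, Fy x ε⟫ = ε i := inner_Fy x hx ε hsum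
        refine ⟨norm_Fy x hx ε hsum hsq, by rw [hin 0]; exact he0, ?_, ?_, ?_⟩
        · have : {i : Fin 11 | i ≠ 0 ∧ ⟪x i, Fy x ε⟫ = α1} = {i | ε i = α1} := by
            ext i
            simp only [Set.mem_setOf_eq, hin]
            constructor
            · exact fun h => h.2
            · intro h
              refine ⟨fun h0 => ?_, h⟩
              rw [h0] at h
              exact a12 (h.symm.trans he0)
          rw [this]; exact he1
        · have : {i : Fin 11 | i ≠ 0 ∧ ⟪x i, Fy x ε⟫ = α2} = {i | ε i = α2} \ {0} := by
            ext i
            simp only [Set.mem_setOf_eq, Set.mem_diff, Set.mem_singleton_iff, hin]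
            tauto
          rw [this, Set.ncard_diff_singleton_of_mem
            (show (0:Fin 11) ∈ {i | ε i = α2} from he0), he2]
        · have : {i : Fin 11 | i ≠ 0 ∧ ⟪x i, Fy x ε⟫ = α3} = {i | ε i = α3} := by
            ext i
            simp only [Set.mem_setOf_eq, hin]
            constructor
            · exact fun h => h.2
            · intro h
              refine ⟨fun h0 => ?_, h⟩
              rw [h0] at h
              exact a23 (he0.symm.trans h)
          rw [this]; exact he3
    have hinj : Set.InjOn (Fy x) Sset := by
      rintro ε ⟨-, h1, h2, h3⟩ ε' ⟨-, h1', h2', h3'⟩ h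
      funext i
      have := inner_Fy x hx ε (sum_eps ε h1 h2 h3) i
      rw [h, inner_Fy x hx ε' (sum_eps ε' h1' h2' h3') i] at this
      exact this.symm
    rw [himg, Set.ncard_image_of_injOn hinj, Sset_ncard]
end
end

section
/- Let x : Fin 11 → ℝ^10 be a regular 11-simplex, let C1 = {x 0, …, x 10}, and let D and D' be two cliques of order 10 in the graph on Y1. Then there exists a bijection f from C1 ∪ D onto C1 ∪ D' preserving all inner products (⟨f u, f v⟩ = ⟨u, v⟩ for all u, v ∈ C1 ∪ D); equivalently, the Gram matrices of C1 ∪ D and C1 ∪ D' are permutationally equivalent. -/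
open RealInnerProductSpace

noncomputable section

/-- A clique of order 10 in the graph on `Y1` in which two distinct vectors are
adjacent iff their inner product equals `α2`. -/
def IsClique10 (x : Fin 11 → EuclideanSpace ℝ (Fin 10))
    (D : Set (EuclideanSpace ℝ (Fin 10))) : Prop :=
  D ⊆ Y1set x ∧ D.ncard = 10 ∧
    ∀ y ∈ D, ∀ y' ∈ D, y ≠ y' → ⟪y, y'⟫ = α2

/-!
The vectors of a regular simplex in `ℝ^10` sum to zero, and from this a unit vector `y` with
`∑ ⟪x i, y⟫² = 11/10` satisfies `y = (10/11) ∑ ⟪x i, y⟫ • x i`. Vectors of `Y1` have this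
property, so inner products between them are determined by their inner products with the
simplex. Writing `⟪x i, y⟫ = α1 - (11/30) ℓ i` with levels `ℓ i ∈ {0, 1, 2}`, two vertices of
`Y1` are adjacent iff `∑ ℓ i ℓ' i = 5`. This forces the unique level-1 indices among `1, …, 10`
("pivots") of the members of a clique to be distinct, so a 10-clique is enumerated by its pivots,
and the relation "`j` is a level-2 index of the member with pivot `k`" is a strongly regular graph
with parameters `(10, 3, 0, 1)`. Such a graph is the Petersen graph. An isomorphism between the
Petersen graphs of two 10-cliques, extended by fixing `x 0`, is the required bijection, since the
Gram matrix of `C1 ∪ D` is a function of the graph.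
-/

open Finset

lemma Fin.ncard_setOf_ne_zero_and {n : ℕ} (Q : Fin (n + 1) → Prop) [DecidablePred Q] :
    {i | i ≠ 0 ∧ Q i}.ncard = #{j : Fin n | Q j.succ} := by
  have : {i | i ≠ 0 ∧ Q i} =
      (({j | Q j.succ} : Finset (Fin n)).map (Fin.succEmb n) : Set (Fin (n + 1))) := by
    ext i
    cases i using Fin.cases <;> simp
  rw [this, Set.ncard_coe_finset, card_map]

lemma exists_equiv_range_of_inner_eq {α β F : Type*} [NormedAddCommGroup F]
    [InnerProductSpace ℝ F] (u : α → F) (v : β → F) (e : α ≃ β)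
    (h : ∀ a b, ⟪v (e a), v (e b)⟫ = ⟪u a, u b⟫) :
    ∃ f : Set.range u ≃ Set.range v, ∀ p q : Set.range u, ⟪(f p : F), f q⟫ = ⟪(p : F), q⟫ := by
  have hker : ∀ a b, u a = u b ↔ v (e a) = v (e b) := by
    intro a b
    have hdist : ⟪v (e a) - v (e b), v (e a) - v (e b)⟫ = ⟪u a - u b, u a - u b⟫ := by
      rw [inner_sub_sub_self, inner_sub_sub_self, h, h, h, h]
    rw [← sub_eq_zero, ← inner_self_eq_zero (𝕜 := ℝ), ← hdist, inner_self_eq_zero, sub_eq_zero]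
  let f := (Setoid.quotientKerEquivRange u).symm.trans
    ((Quotient.congr e hker).trans (Setoid.quotientKerEquivRange v))
  have hf : ∀ a, (f ⟨u a, a, rfl⟩ : F) = v (e a) := by
    intro a
    have : (Setoid.quotientKerEquivRange u).symm ⟨u a, a, rfl⟩ = ⟦a⟧ := by
      rw [Equiv.symm_apply_eq]
      rfl
    simp only [f, Equiv.trans_apply, this]
    rfl
  refine ⟨f, ?_⟩
  rintro ⟨_, a, rfl⟩ ⟨_, b, rfl⟩
  rw [hf, hf, h]

section RegularSimplex

variable {ι E : Type*} [Fintype ι] [NormedAddCommGroup E] [InnerProductSpace ℝ E]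
  {x : ι → E} {n : ℝ}

lemma inner_sum_smul_of_regular (hnorm : ∀ i, ‖x i‖ = 1)
    (hinner : ∀ i j, i ≠ j → ⟪x i, x j⟫ = -1 / n) (i : ι) (c : ι → ℝ) :
    ⟪x i, ∑ j, c j • x j⟫ = (1 + 1 / n) * c i - 1 / n * ∑ j, c j := by
  classical
  have hsplit : ∀ j,
      c j * ⟪x i, x j⟫ = -1 / n * c j + if i = j then (1 + 1 / n) * c j else 0 := by
    intro j
    split_ifs with h
    · rw [← h, real_inner_self_eq_norm_sq, hnorm]
      ring
    · rw [hinner i j h]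
      ring
  simp only [inner_sum, real_inner_smul_right, hsplit, sum_add_distrib, sum_ite_eq, mem_univ,
    if_true, ← mul_sum]
  ring

lemma sum_eq_zero_of_regular (hcard : (Fintype.card ι : ℝ) = n + 1) (hn : n ≠ 0)
    (hnorm : ∀ i, ‖x i‖ = 1) (hinner : ∀ i j, i ≠ j → ⟪x i, x j⟫ = -1 / n) :
    ∑ i, x i = 0 := by
  have h : ∀ i, ⟪x i, ∑ j, x j⟫ = 0 := by
    intro i
    have := inner_sum_smul_of_regular hnorm hinner i fun _ => 1
    simp only [one_smul, sum_const, card_univ, nsmul_eq_mul, hcard, mul_one] at this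
    rw [this]
    field_simp
    ring
  rw [← inner_self_eq_zero (𝕜 := ℝ), sum_inner]
  simp [h]

lemma inner_sum_inner_smul_of_regular (hcard : (Fintype.card ι : ℝ) = n + 1) (hn : n ≠ 0)
    (hnorm : ∀ i, ‖x i‖ = 1) (hinner : ∀ i j, i ≠ j → ⟪x i, x j⟫ = -1 / n) (y : E) (i : ι) :
    ⟪x i, ∑ j, ⟪x j, y⟫ • x j⟫ = (1 + 1 / n) * ⟪x i, y⟫ := by
  rw [inner_sum_smul_of_regular hnorm hinner, ← sum_inner,
    sum_eq_zero_of_regular hcard hn hnorm hinner, inner_zero_left, mul_zero, sub_zero]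

lemma inner_eq_sum_mul_of_sum_sq (hcard : (Fintype.card ι : ℝ) = n + 1) (hn : 0 < n)
    (hnorm : ∀ i, ‖x i‖ = 1) (hinner : ∀ i j, i ≠ j → ⟪x i, x j⟫ = -1 / n) {y : E}
    (hy : ∑ i, ⟪x i, y⟫ ^ 2 = (1 + 1 / n) * ‖y‖ ^ 2) (z : E) :
    ⟪y, z⟫ = n / (n + 1) * ∑ i, ⟪x i, y⟫ * ⟪x i, z⟫ := by
  set v := ∑ j, ⟪x j, y⟫ • x j
  have hvy : ⟪v, y⟫ = ∑ i, ⟪x i, y⟫ ^ 2 := by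
    simp [v, sum_inner, real_inner_smul_left, sq]
  have hvv : ⟪v, v⟫ = (1 + 1 / n) * ∑ i, ⟪x i, y⟫ ^ 2 := by
    simp only [v, sum_inner, real_inner_smul_left,
      inner_sum_inner_smul_of_regular hcard hn.ne' hnorm hinner, mul_sum]
    exact sum_congr rfl fun i _ => by ring
  -- `hy` is exactly what makes `y - (n / (n + 1)) • v` have norm zero
  have hzero : y = (n / (n + 1)) • v := by
    rw [← sub_eq_zero, ← inner_self_eq_zero (𝕜 := ℝ), inner_sub_sub_self, real_inner_smul_left,
      real_inner_smul_right, real_inner_smul_left, real_inner_smul_right, real_inner_comm v y,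
      hvy, hvv, hy, real_inner_self_eq_norm_sq]
    field_simp
    ring
  conv_lhs => rw [hzero]
  simp [v, real_inner_smul_left, sum_inner, mul_sum]

end RegularSimplex

/-- The Petersen graph is the Kneser graph `K(5, 2)`; its vertices `0, …, 9` are listed in the order
`o, a, b, c, a₁, a₂, b₁, b₂, c₁, c₂` in which `SimpleGraph.IsSRGWith.nonempty_iso_petersenGraph`
finds them. -/
def petersenPair : Fin 10 → Finset (Fin 5) :=
  ![{0, 1}, {2, 3}, {2, 4}, {3, 4}, {0, 4}, {1, 4}, {1, 3}, {0, 3}, {1, 2}, {0, 2}]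

def petersenGraph : SimpleGraph (Fin 10) :=
  SimpleGraph.fromRel fun j k => Disjoint (petersenPair j) (petersenPair k)

instance : DecidableRel petersenGraph.Adj := fun j k =>
  inferInstanceAs (Decidable (j ≠ k ∧ (Disjoint (petersenPair j) (petersenPair k) ∨
    Disjoint (petersenPair k) (petersenPair j))))

lemma petersenGraph_isRegularOfDegree : petersenGraph.IsRegularOfDegree 3 := by
  intro j
  decide +revert

namespace SimpleGraph

variable {V W : Type*} [Fintype V] [Fintype W] {G : SimpleGraph V} {H : SimpleGraph W}
  [DecidableRel G.Adj] [DecidableRel H.Adj] {n k ℓ μ : ℕ} {u v w a b c : V}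

theorem Hom.adj_iff_of_injective_of_degree_le (f : G →g H) (hf : Function.Injective f)
    (hdeg : ∀ v, H.degree (f v) ≤ G.degree v) : H.Adj (f u) (f v) ↔ G.Adj u v := by
  classical
  have hsub : (G.neighborFinset v).map ⟨f, hf⟩ ⊆ H.neighborFinset (f v) := by
    intro w' hw'
    obtain ⟨w, hw, rfl⟩ := Finset.mem_map.mp hw'
    rw [mem_neighborFinset] at hw ⊢
    exact f.map_adj hw
  have heq := Finset.eq_of_subset_of_card_le hsub <| by
    rw [Finset.card_map, card_neighborFinset_eq_degree, card_neighborFinset_eq_degree]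
    exact hdeg v
  rw [H.adj_comm, ← mem_neighborFinset, ← heq, G.adj_comm]
  simp

theorem adj_iff_of_degree_eq_three (hv : G.degree v = 3) (ha : G.Adj v a) (hb : G.Adj v b)
    (hc : G.Adj v c) (hab : a ≠ b) (hac : a ≠ c) (hbc : b ≠ c) :
    G.Adj v w ↔ w = a ∨ w = b ∨ w = c := by
  classical
  have hsub : ({a, b, c} : Finset V) ⊆ G.neighborFinset v := by
    intro z hz
    simp only [Finset.mem_insert, Finset.mem_singleton] at hz
    rcases hz with rfl | rfl | rfl <;> simpa
  have heq := Finset.eq_of_subset_of_card_le hsub <| by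
    rw [card_neighborFinset_eq_degree, hv, Finset.card_eq_three.mpr ⟨a, b, c, hab, hac, hbc, rfl⟩]
  rw [← mem_neighborFinset, ← heq]
  simp

theorem exists_adj_of_degree_eq_three (hv : G.degree v = 3) (hu : G.Adj v u) :
    ∃ b c, G.Adj v b ∧ G.Adj v c ∧ u ≠ b ∧ u ≠ c ∧ b ≠ c := by
  classical
  obtain ⟨x, y, z, hxy, hxz, hyz, hs⟩ := Finset.card_eq_three.mp hv
  have hmem : ∀ w, G.Adj v w ↔ w = x ∨ w = y ∨ w = z := fun w => by
    rw [← mem_neighborFinset, hs]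
    simp
  rcases (hmem u).mp hu with rfl | rfl | rfl
  · exact ⟨y, z, (hmem y).2 (by simp), (hmem z).2 (by simp), hxy, hxz, hyz⟩
  · exact ⟨x, z, (hmem x).2 (by simp), (hmem z).2 (by simp), hxy.symm, hyz, hxz⟩
  · exact ⟨x, y, (hmem x).2 (by simp), (hmem y).2 (by simp), hxz.symm, hyz.symm, hxy⟩

theorem IsSRGWith.not_adj_of_adj_of_adj (h : G.IsSRGWith n k 0 μ) (huv : G.Adj u v)
    (huw : G.Adj u w) : ¬G.Adj v w := fun hvw =>
  (Fintype.card_eq_zero_iff.mp (h.of_adj v w hvw)).false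
    ⟨u, G.mem_commonNeighbors.mpr ⟨huv.symm, huw.symm⟩⟩

theorem IsSRGWith.eq_of_adj_of_adj (h : G.IsSRGWith n k ℓ 1) (hvw : v ≠ w) (hn : ¬G.Adj v w)
    (hva : G.Adj v a) (hwa : G.Adj w a) (hvb : G.Adj v b) (hwb : G.Adj w b) : a = b := by
  obtain ⟨z, hz⟩ := Fintype.card_eq_one_iff.mp (h.of_not_adj hvw hn)
  exact congrArg Subtype.val <| (hz ⟨a, G.mem_commonNeighbors.mpr ⟨hva, hwa⟩⟩).trans
    (hz ⟨b, G.mem_commonNeighbors.mpr ⟨hvb, hwb⟩⟩).symm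

theorem IsSRGWith.exists_adj_adj (h : G.IsSRGWith n k ℓ 1) (hvw : v ≠ w) (hn : ¬G.Adj v w) :
    ∃ a, G.Adj v a ∧ G.Adj w a := by
  obtain ⟨⟨a, ha⟩, -⟩ := Fintype.card_eq_one_iff.mp (h.of_not_adj hvw hn)
  exact ⟨a, G.mem_commonNeighbors.mp ha⟩

theorem IsSRGWith.exists_adj_iff_of_adj (h : G.IsSRGWith n 3 0 1) {o a₁ a₂ : V}
    (hoa : G.Adj o a) (hob : G.Adj o b) (hab : a ≠ b) (ha₁ : G.Adj a a₁) (ha₂ : G.Adj a a₂)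
    (ho₁ : o ≠ a₁) (ho₂ : o ≠ a₂) (h₁₂ : a₁ ≠ a₂) :
    ∃ b₁ b₂, G.Adj a₁ b₁ ∧ G.Adj a₂ b₂ ∧ ∀ w, G.Adj b w ↔ w = o ∨ w = b₁ ∨ w = b₂ := by
  have hnab : ¬G.Adj a b := h.not_adj_of_adj_of_adj hoa hob
  have hcommon : ∀ {a'}, G.Adj a a' → o ≠ a' → ∃ b', G.Adj a' b' ∧ G.Adj b b' ∧ o ≠ b' := by
    intro a' ha' hoa'
    have hn : ¬G.Adj a' b := fun hab' =>
      hoa' (h.eq_of_adj_of_adj hab hnab hoa.symm hob.symm ha' hab'.symm)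
    obtain ⟨b', h₁, h₂⟩ := h.exists_adj_adj (by rintro rfl; exact hnab ha') hn
    refine ⟨b', h₁, h₂, ?_⟩
    rintro rfl
    exact h.not_adj_of_adj_of_adj hoa.symm ha' h₁.symm
  obtain ⟨b₁, hab₁, hbb₁, hob₁⟩ := hcommon ha₁ ho₁
  obtain ⟨b₂, hab₂, hbb₂, hob₂⟩ := hcommon ha₂ ho₂
  -- a common `b₁ = b₂` would be a second common neighbour of `a₁` and `a₂` besides `a`
  have hb₁₂ : b₁ ≠ b₂ := by
    rintro rfl
    have hna : ¬G.Adj a₁ a₂ := h.not_adj_of_adj_of_adj ha₁ ha₂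
    exact hnab (h.eq_of_adj_of_adj h₁₂ hna ha₁.symm ha₂.symm hab₁ hab₂ ▸ hbb₁.symm)
  exact ⟨b₁, b₂, hab₁, hab₂, fun w =>
    adj_iff_of_degree_eq_three (h.regular.degree_eq b) hob.symm hbb₁ hbb₂ hob₁ hob₂ hb₁₂⟩

theorem IsSRGWith.adj_of_adj_iff (h : G.IsSRGWith n 3 0 1) {o a₁ b₁ c₁ c₂ : V}
    (hob : G.Adj o b) (hoc : G.Adj o c) (hbc : b ≠ c) (hbb₁ : G.Adj b b₁) (hab₁ : G.Adj a₁ b₁)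
    (hac₁ : G.Adj a₁ c₁) (hoa₁ : ¬G.Adj o a₁) (hc : ∀ w, G.Adj c w ↔ w = o ∨ w = c₁ ∨ w = c₂) :
    G.Adj b₁ c₂ := by
  have hnbc : ¬G.Adj b c := h.not_adj_of_adj_of_adj hob hoc
  have hn : ¬G.Adj b₁ c := fun hb₁c =>
    hoa₁ (h.eq_of_adj_of_adj hbc hnbc hbb₁ hb₁c.symm hob.symm hoc.symm ▸ hab₁.symm)
  obtain ⟨l, hb₁l, hcl⟩ := h.exists_adj_adj (by rintro rfl; exact hnbc hbb₁) hn
  -- `l` is neither `o` (triangle `o b b₁`) nor `c₁` (triangle `a₁ b₁ c₁`)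
  rcases (hc l).mp hcl with rfl | rfl | rfl
  · exact absurd hb₁l.symm (h.not_adj_of_adj_of_adj hob.symm hbb₁)
  · exact absurd hb₁l (h.not_adj_of_adj_of_adj hab₁ hac₁)
  · exact hb₁l

theorem IsSRGWith.mem_range_of_adj_iff (h : G.IsSRGWith n k ℓ 1)
    {o a b c a₁ a₂ b₁ b₂ c₁ c₂ : V} (ho : ∀ w, G.Adj o w ↔ w = a ∨ w = b ∨ w = c)
    (ha : ∀ w, G.Adj a w ↔ w = o ∨ w = a₁ ∨ w = a₂) (hb : ∀ w, G.Adj b w ↔ w = o ∨ w = b₁ ∨ w = b₂)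
    (hc : ∀ w, G.Adj c w ↔ w = o ∨ w = c₁ ∨ w = c₂) (v : V) :
    v ∈ Set.range ![o, a, b, c, a₁, a₂, b₁, b₂, c₁, c₂] := by
  simp only [Matrix.range_cons, Matrix.range_empty, Set.union_empty, Set.mem_union,
    Set.mem_singleton_iff]
  by_cases hvo : v = o
  · simp [hvo]
  by_cases hov : G.Adj o v
  · rcases (ho v).mp hov with rfl | rfl | rfl <;> simp
  obtain ⟨w, how, hvw⟩ := h.exists_adj_adj (Ne.symm hvo) hov
  rcases (ho w).mp how with rfl | rfl | rfl
  · rcases (ha v).mp hvw.symm with rfl | rfl | rfl <;> simp_all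
  · rcases (hb v).mp hvw.symm with rfl | rfl | rfl <;> simp_all
  · rcases (hc v).mp hvw.symm with rfl | rfl | rfl <;> simp_all

theorem IsSRGWith.nonempty_iso_petersenGraph (h : G.IsSRGWith 10 3 0 1) :
    Nonempty (petersenGraph ≃g G) := by
  have hdeg := h.regular.degree_eq
  obtain ⟨o⟩ : Nonempty V := Fintype.card_pos_iff.mp (by rw [h.card]; norm_num)
  obtain ⟨a, hoa⟩ := (G.degree_pos_iff_exists_adj o).mp (by rw [hdeg o]; norm_num)
  obtain ⟨b, c, hob, hoc, hab, hac, hbc⟩ := exists_adj_of_degree_eq_three (hdeg o) hoa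
  obtain ⟨a₁, a₂, ha₁, ha₂, ho₁, ho₂, h₁₂⟩ := exists_adj_of_degree_eq_three (hdeg a) hoa.symm
  obtain ⟨b₁, b₂, hab₁, hab₂, hb⟩ := h.exists_adj_iff_of_adj hoa hob hab ha₁ ha₂ ho₁ ho₂ h₁₂
  obtain ⟨c₁, c₂, hac₁, hac₂, hc⟩ := h.exists_adj_iff_of_adj hoa hoc hac ha₁ ha₂ ho₁ ho₂ h₁₂
  have hbb₁ : G.Adj b b₁ := (hb b₁).2 (by simp)
  have hbb₂ : G.Adj b b₂ := (hb b₂).2 (by simp)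
  have hcc₁ : G.Adj c c₁ := (hc c₁).2 (by simp)
  have hcc₂ : G.Adj c c₂ := (hc c₂).2 (by simp)
  have hoa₁ : ¬G.Adj o a₁ := h.not_adj_of_adj_of_adj hoa.symm ha₁
  have hb₁c₂ : G.Adj b₁ c₂ := h.adj_of_adj_iff hob hoc hbc hbb₁ hab₁ hac₁ hoa₁ hc
  have hc₁b₂ : G.Adj c₁ b₂ := h.adj_of_adj_iff hoc hob hbc.symm hcc₁ hac₁ hab₁ hoa₁ hb
  let g : Fin 10 → V := ![o, a, b, c, a₁, a₂, b₁, b₂, c₁, c₂]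
  -- the fifteen adjacencies above are the images of the edges of `petersenGraph`
  have hg : ∀ j k, petersenGraph.Adj j k → G.Adj (g j) (g k) := by
    intro j k hjk
    fin_cases j <;> fin_cases k <;> first
      | exact absurd hjk (by decide)
      | simp only [g]; first | assumption | exact G.adj_symm ‹_›
  have hbij : Function.Bijective g := (Fintype.bijective_iff_surjective_and_card g).mpr
    ⟨h.mem_range_of_adj_iff
      (fun _ => adj_iff_of_degree_eq_three (hdeg o) hoa hob hoc hab hac hbc)
      (fun _ => adj_iff_of_degree_eq_three (hdeg a) hoa.symm ha₁ ha₂ ho₁ ho₂ h₁₂) hb hc,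
      by simp [h.card]⟩
  let φ : petersenGraph →g G := ⟨g, hg _ _⟩
  exact ⟨⟨Equiv.ofBijective g hbij, φ.adj_iff_of_injective_of_degree_le hbij.1 fun j => by
    rw [hdeg, petersenGraph_isRegularOfDegree.degree_eq]⟩⟩

theorem IsSRGWith.nonempty_iso (hG : G.IsSRGWith 10 3 0 1) (hH : H.IsSRGWith 10 3 0 1) :
    Nonempty (G ≃g H) :=
  let ⟨φ⟩ := hG.nonempty_iso_petersenGraph
  let ⟨ψ⟩ := hH.nonempty_iso_petersenGraph
  ⟨φ.symm.trans ψ⟩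

end SimpleGraph

/-- The levels `0`, `1`, `2` stand for the values `α1`, `α2 = α1 - 11/30`, `α3 = α1 - 22/30` of
`⟪x i, y⟫` (see `HasLevels`): the index `0` and the pivot `p.succ` have level `1`, the indices in
`T.succ` level `2`. -/
def level (p : Fin 10) (T : Finset (Fin 10)) : Fin 11 → ℕ :=
  Fin.cons 1 fun j => if j = p then 1 else if j ∈ T then 2 else 0

section Levels

variable {p p' : Fin 10} {T T' : Finset (Fin 10)}

lemma level_zero : level p T 0 = 1 := rfl

lemma level_succ (hp : p ∉ T) (j : Fin 10) :
    level p T j.succ = (if j = p then 1 else 0) + 2 * if j ∈ T then 1 else 0 := by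
  simp only [level, Fin.cons_succ]
  split_ifs <;> simp_all

lemma sum_level (hp : p ∉ T) (hT : #T = 3) : ∑ i, level p T i = 8 := by
  rw [Fin.sum_univ_succ, level_zero]
  simp [level_succ hp, sum_add_distrib, hT]

lemma sum_level_mul_level (hp : p ∉ T) (hp' : p' ∉ T') :
    ∑ i, level p T i * level p' T' i = 1 + (if p = p' then 1 else 0) +
      2 * (if p ∈ T' then 1 else 0) + 2 * (if p' ∈ T then 1 else 0) + 4 * #(T ∩ T') := by
  rw [Fin.sum_univ_succ, level_zero, level_zero]
  simp only [level_succ hp, level_succ hp', mul_add, add_mul, mul_ite, ite_mul, mul_one, one_mul,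
    mul_zero, zero_mul, sum_add_distrib, sum_ite_eq', sum_ite_mem, mem_univ, if_true, univ_inter,
    sum_const, smul_eq_mul, inter_comm T', eq_comm (a := p')]
  split_ifs <;> omega

lemma sum_level_mul_level_eq_five_iff (hp : p ∉ T) (hp' : p' ∉ T') :
    ∑ i, level p T i * level p' T' i = 5 ↔
      p ≠ p' ∧ (p ∈ T' ∧ p' ∈ T ∧ Disjoint T T' ∨ p ∉ T' ∧ p' ∉ T ∧ #(T ∩ T') = 1) := by
  rw [sum_level_mul_level hp hp', disjoint_iff_inter_eq_empty, ← card_eq_zero]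
  grind

end Levels

structure HasLevels (x : Fin 11 → EuclideanSpace ℝ (Fin 10)) (y : EuclideanSpace ℝ (Fin 10))
    (p : Fin 10) (T : Finset (Fin 10)) : Prop where
  notMem : p ∉ T
  card_eq : #T = 3
  inner_eq : ∀ i, ⟪x i, y⟫ = α1 - 11 / 30 * level p T i

section HasLevels

variable {x : Fin 11 → EuclideanSpace ℝ (Fin 10)} {y y' : EuclideanSpace ℝ (Fin 10)}
  {p p' : Fin 10} {T T' : Finset (Fin 10)}

lemma exists_hasLevels_of_mem_Y1set (hy : y ∈ Y1set x) : ∃ p T, HasLevels x y p T := by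
  classical
  obtain ⟨-, h0, h1, h2, h3⟩ := hy
  simp only [Fin.ncard_setOf_ne_zero_and] at h1 h2 h3
  let A : ℝ → Finset (Fin 10) := fun a => {j | ⟪x j.succ, y⟫ = a}
  have hA : ∀ {j a}, j ∈ A a ↔ ⟪x j.succ, y⟫ = a := by simp [A]
  have hdisj : ∀ {a b}, a ≠ b → Disjoint (A a) (A b) := fun hab =>
    disjoint_filter.2 fun _ _ ha hb => hab (ha.symm.trans hb)
  -- the three classes have `6 + 1 + 3 = 10` elements, so every index lies in one of them
  have hcover : A α1 ∪ A α2 ∪ A α3 = univ := by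
    refine eq_univ_of_card _ ?_
    rw [card_union_of_disjoint (disjoint_union_left.2 ⟨hdisj (by norm_num [α1, α3]),
      hdisj (by norm_num [α2, α3])⟩), card_union_of_disjoint (hdisj (by norm_num [α1, α2])),
      h1, h2, h3, Fintype.card_fin]
  obtain ⟨p, hp⟩ := card_eq_one.mp h2
  have hpA : ∀ {j}, j ∈ A α2 ↔ j = p := by
    intro j
    rw [show A α2 = {p} from hp, mem_singleton]
  refine ⟨p, A α3, fun hpT => ?_, h3, fun i => ?_⟩
  · have := (hA.1 (hpA.2 rfl)).symm.trans (hA.1 hpT)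
    norm_num [α2, α3] at this
  cases i using Fin.cases with
  | zero => rw [h0, level_zero]; norm_num [α1, α2]
  | succ j =>
    have hj := hcover ▸ mem_univ j
    simp only [mem_union] at hj
    simp only [level, Fin.cons_succ]
    split_ifs with hjp hjT
    · rw [hA.1 (hpA.2 hjp)]; norm_num [α1, α2]
    · rw [hA.1 hjT]; norm_num [α1, α3]
    · rcases hj with (hj | hj) | hj
      · rw [hA.1 hj]; norm_num
      · exact absurd (hpA.1 hj) hjp
      · exact absurd hj hjT

lemma HasLevels.sum_inner_mul_inner (h : HasLevels x y p T) (h' : HasLevels x y' p' T') :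
    ∑ i, ⟪x i, y⟫ * ⟪x i, y'⟫ =
      (121 * (∑ i, level p T i * level p' T' i : ℕ) - 704) / 900 := by
  have hs : ∑ i, (level p T i : ℝ) = 8 := by exact_mod_cast sum_level h.notMem h.card_eq
  have hs' : ∑ i, (level p' T' i : ℝ) = 8 := by exact_mod_cast sum_level h'.notMem h'.card_eq
  have hexpand : ∀ i, ⟪x i, y⟫ * ⟪x i, y'⟫ = α1 ^ 2 - 11 / 30 * α1 * level p T i -
      11 / 30 * α1 * level p' T' i + 121 / 900 * (level p T i * level p' T' i) := fun i => by
    rw [h.inner_eq, h'.inner_eq]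
    ring
  simp only [hexpand, sum_add_distrib, sum_sub_distrib, ← mul_sum, hs, hs', sum_const,
    card_univ, Fintype.card_fin]
  push_cast
  norm_num [α1]
  ring

lemma HasLevels.inner_eq_sum_level_mul_level (hx : IsRegularSimplex x) (hy : ‖y‖ = 1)
    (h : HasLevels x y p T) (h' : HasLevels x y' p' T') :
    ⟪y, y'⟫ = (11 * (∑ i, level p T i * level p' T' i : ℕ) - 64) / 90 := by
  have hself : ∑ i, level p T i * level p T i = 14 := by
    rw [sum_level_mul_level h.notMem h.notMem, if_pos rfl, if_neg h.notMem, inter_self,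
      h.card_eq]
  have henergy : ∑ i, ⟪x i, y⟫ ^ 2 = (1 + 1 / 10) * ‖y‖ ^ 2 := by
    simp only [sq]
    rw [h.sum_inner_mul_inner h, hself, hy]
    norm_num
  rw [inner_eq_sum_mul_of_sum_sq (by norm_num) (by norm_num) hx.1 hx.2 henergy,
    h.sum_inner_mul_inner h']
  ring

lemma HasLevels.sum_level_mul_level_eq_five (hx : IsRegularSimplex x) (hy : ‖y‖ = 1)
    (h : HasLevels x y p T) (h' : HasLevels x y' p' T') (hα : ⟪y, y'⟫ = α2) :
    ∑ i, level p T i * level p' T' i = 5 := by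
  rw [h.inner_eq_sum_level_mul_level hx hy h', α2] at hα
  exact_mod_cast (by linarith : ((∑ i, level p T i * level p' T' i : ℕ) : ℝ) = 5)

end HasLevels

structure IsPivotClique (x : Fin 11 → EuclideanSpace ℝ (Fin 10))
    (y : Fin 10 → EuclideanSpace ℝ (Fin 10)) (T : Fin 10 → Finset (Fin 10)) : Prop where
  norm_eq_one : ∀ k, ‖y k‖ = 1
  inner_eq_α2 : ∀ j k, j ≠ k → ⟪y j, y k⟫ = α2
  hasLevels : ∀ k, HasLevels x (y k) k (T k)

def pivotGraph (T : Fin 10 → Finset (Fin 10)) : SimpleGraph (Fin 10) :=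
  SimpleGraph.fromRel fun j k => j ∈ T k

instance (T : Fin 10 → Finset (Fin 10)) : DecidableRel (pivotGraph T).Adj := fun j k =>
  inferInstanceAs (Decidable (j ≠ k ∧ (j ∈ T k ∨ k ∈ T j)))

def cliqueGram (T : Fin 10 → Finset (Fin 10)) : Fin 11 ⊕ Fin 10 → Fin 11 ⊕ Fin 10 → ℝ
  | .inl i, .inl i' => if i = i' then 1 else -1 / 10
  | .inl i, .inr k => α1 - 11 / 30 * level k (T k) i
  | .inr k, .inl i => α1 - 11 / 30 * level k (T k) i
  | .inr j, .inr k => if j = k then 1 else α2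

section IsPivotClique

variable {x : Fin 11 → EuclideanSpace ℝ (Fin 10)}

lemma IsClique10.exists_isPivotClique {D : Set (EuclideanSpace ℝ (Fin 10))}
    (hx : IsRegularSimplex x) (hD : IsClique10 x D) :
    ∃ y T, Set.range y = D ∧ IsPivotClique x y T := by
  obtain ⟨hDY, hcard, hadj⟩ := hD
  choose! p T hpT using fun z (hz : z ∈ D) => exists_hasLevels_of_mem_Y1set (hDY hz)
  have hinj : Set.InjOn p D := fun z hz z' hz' hpz => by
    by_contra hne
    have := (hpT z hz).sum_level_mul_level_eq_five hx (hDY hz).1 (hpT z' hz')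
      (hadj z hz z' hz' hne)
    exact ((sum_level_mul_level_eq_five_iff (hpT z hz).notMem (hpT z' hz').notMem).1 this).1 hpz
  have himage : p '' D = Set.univ := Set.eq_of_subset_of_ncard_le (Set.subset_univ _) <| by
    rw [hinj.ncard_image, hcard, Set.ncard_univ, Nat.card_eq_fintype_card, Fintype.card_fin]
  choose y hyD hpy using fun k => (Set.ext_iff.mp himage k).mpr trivial
  refine ⟨y, fun k => T (y k), Set.eq_of_subset_of_subset (Set.range_subset_iff.2 hyD)
    fun z hz => ⟨p z, hinj (hyD _) hz (hpy _)⟩, fun k => (hDY (hyD k)).1, fun j k hjk => ?_,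
    fun k => ?_⟩
  · exact hadj _ (hyD j) _ (hyD k) fun e => hjk (by rw [← hpy j, ← hpy k, e])
  · simpa only [hpy k] using hpT _ (hyD k)

variable {y : Fin 10 → EuclideanSpace ℝ (Fin 10)} {T : Fin 10 → Finset (Fin 10)}

lemma IsPivotClique.disjoint_or_card_inter_eq_one (hx : IsRegularSimplex x)
    (h : IsPivotClique x y T) {j k : Fin 10} (hjk : j ≠ k) :
    j ∈ T k ∧ k ∈ T j ∧ Disjoint (T j) (T k) ∨ j ∉ T k ∧ k ∉ T j ∧ #(T j ∩ T k) = 1 :=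
  ((sum_level_mul_level_eq_five_iff (h.hasLevels j).notMem (h.hasLevels k).notMem).1
    ((h.hasLevels j).sum_level_mul_level_eq_five hx (h.norm_eq_one j) (h.hasLevels k)
      (h.inner_eq_α2 j k hjk))).2

lemma IsPivotClique.pivotGraph_adj (hx : IsRegularSimplex x) (h : IsPivotClique x y T)
    {j k : Fin 10} : (pivotGraph T).Adj j k ↔ j ∈ T k := by
  rw [pivotGraph, SimpleGraph.fromRel_adj]
  constructor
  · rintro ⟨hjk, hj | hk⟩
    · exact hj
    · rcases h.disjoint_or_card_inter_eq_one hx hjk with ⟨hj, -⟩ | ⟨-, hk', -⟩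
      exacts [hj, absurd hk hk']
  · intro hj
    exact ⟨by rintro rfl; exact (h.hasLevels j).notMem hj, Or.inl hj⟩

lemma IsPivotClique.isSRGWith (hx : IsRegularSimplex x) (h : IsPivotClique x y T) :
    (pivotGraph T).IsSRGWith 10 3 0 1 where
  card := Fintype.card_fin 10
  regular k := by
    have : (pivotGraph T).neighborFinset k = T k := by
      ext j
      rw [SimpleGraph.mem_neighborFinset, SimpleGraph.adj_comm, h.pivotGraph_adj hx]
    rw [← SimpleGraph.card_neighborFinset_eq_degree, this, (h.hasLevels k).card_eq]
  of_adj j k hjk := by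
    refine Fintype.card_eq_zero_iff.mpr ⟨fun ⟨l, hjl, hkl⟩ => ?_⟩
    rw [SimpleGraph.mem_neighborSet, SimpleGraph.adj_comm, h.pivotGraph_adj hx] at hjl hkl
    rcases h.disjoint_or_card_inter_eq_one hx hjk.ne with ⟨-, -, hdisj⟩ | ⟨hj, -⟩
    exacts [disjoint_left.1 hdisj hjl hkl, hj ((h.pivotGraph_adj hx).1 hjk)]
  of_not_adj j k hjk hn := by
    rcases h.disjoint_or_card_inter_eq_one hx hjk with ⟨hj, -⟩ | ⟨-, -, hcard⟩
    · exact absurd ((h.pivotGraph_adj hx).2 hj) hn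
    rw [← Set.toFinset_card, ← hcard]
    congr 1
    ext l
    simp [SimpleGraph.mem_commonNeighbors, SimpleGraph.adj_comm _ _ l, h.pivotGraph_adj hx]

lemma IsPivotClique.inner_sumElim (hx : IsRegularSimplex x) (h : IsPivotClique x y T)
    (s t : Fin 11 ⊕ Fin 10) : ⟪Sum.elim x y s, Sum.elim x y t⟫ = cliqueGram T s t := by
  rcases s with i | j <;> rcases t with i' | k <;>
    simp only [Sum.elim_inl, Sum.elim_inr, cliqueGram]
  · split_ifs with hii
    · rw [hii, real_inner_self_eq_norm_sq, hx.1]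
      norm_num
    · exact hx.2 i i' hii
  · exact (h.hasLevels k).inner_eq i
  · rw [real_inner_comm]
    exact (h.hasLevels j).inner_eq i'
  · split_ifs with hjk
    · rw [hjk, real_inner_self_eq_norm_sq, h.norm_eq_one]
      norm_num
    · exact h.inner_eq_α2 j k hjk

end IsPivotClique

/-- `Equiv.Perm.decomposeFin.symm (0, ρ)` fixes `0` and sends `j.succ` to `(ρ j).succ`. -/
lemma level_decomposeFin_symm {ρ : Equiv.Perm (Fin 10)} {k : Fin 10} {S S' : Finset (Fin 10)}
    (hρ : ∀ j, ρ j ∈ S' ↔ j ∈ S) (i : Fin 11) :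
    level (ρ k) S' (Equiv.Perm.decomposeFin.symm (0, ρ) i) = level k S i := by
  cases i using Fin.cases with
  | zero => simp [level_zero]
  | succ j => simp [level, hρ]

lemma cliqueGram_sumCongr {T T' : Fin 10 → Finset (Fin 10)} {ρ : Equiv.Perm (Fin 10)}
    (hρ : ∀ j k, ρ j ∈ T' (ρ k) ↔ j ∈ T k) (s t : Fin 11 ⊕ Fin 10) :
    cliqueGram T' (Equiv.sumCongr (Equiv.Perm.decomposeFin.symm (0, ρ)) ρ s)
      (Equiv.sumCongr (Equiv.Perm.decomposeFin.symm (0, ρ)) ρ t) = cliqueGram T s t := by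
  rcases s with i | j <;> rcases t with i' | k <;> simp only [cliqueGram, Equiv.sumCongr_apply,
    Sum.map_inl, Sum.map_inr, EmbeddingLike.apply_eq_iff_eq, level_decomposeFin_symm (hρ · _)]

/-- For any two cliques `D`, `D'` of order 10 in the graph on `Y1`, there is an
inner-product-preserving bijection from `C1 ∪ D` onto `C1 ∪ D'`, where
`C1 = {x 0, …, x 10}`; i.e. the Gram matrices are permutationally equivalent. -/
theorem cliques10_gram_equivalent (x : Fin 11 → EuclideanSpace ℝ (Fin 10))
    (hx : IsRegularSimplex x)
    (D D' : Set (EuclideanSpace ℝ (Fin 10)))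
    (hD : IsClique10 x D) (hD' : IsClique10 x D') :
    ∃ f : (Set.range x ∪ D : Set (EuclideanSpace ℝ (Fin 10))) ≃
          (Set.range x ∪ D' : Set (EuclideanSpace ℝ (Fin 10))),
      ∀ u v : (Set.range x ∪ D : Set (EuclideanSpace ℝ (Fin 10))),
        ⟪(f u : EuclideanSpace ℝ (Fin 10)), (f v : EuclideanSpace ℝ (Fin 10))⟫ =
        ⟪(u : EuclideanSpace ℝ (Fin 10)), (v : EuclideanSpace ℝ (Fin 10))⟫ := by
  obtain ⟨y, T, rfl, hyT⟩ := hD.exists_isPivotClique hx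
  obtain ⟨y', T', rfl, hyT'⟩ := hD'.exists_isPivotClique hx
  obtain ⟨φ⟩ := (hyT.isSRGWith hx).nonempty_iso (hyT'.isSRGWith hx)
  have hφ : ∀ j k, φ.toEquiv j ∈ T' (φ.toEquiv k) ↔ j ∈ T k := fun j k => by
    rw [RelIso.coe_fn_toEquiv, ← hyT'.pivotGraph_adj hx, φ.map_adj_iff, hyT.pivotGraph_adj hx]
  rw [← Set.Sum.elim_range, ← Set.Sum.elim_range]
  refine exists_equiv_range_of_inner_eq _ _
    (Equiv.sumCongr (Equiv.Perm.decomposeFin.symm (0, φ.toEquiv)) φ.toEquiv) fun s t => ?_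
  rw [hyT.inner_sumElim hx, hyT'.inner_sumElim hx, cliqueGram_sumCongr hφ]
end
end

section
/- Let x : Fin 11 → ℝ^10 be a regular 11-simplex and let C2 be a clique of order 10 in the graph on Y1. Then the set Y (unit vectors u ∉ C2 whose inner products with x 0, …, x 10 take the value α1 exactly six times, α2 exactly two times, and α3 exactly three times) has exactly 4610 elements. -/
open RealInnerProductSpace

noncomputable section

/-- The set `Y`: unit vectors `u ∉ C2` whose inner products with
`x 0, …, x 10` take the value `α1` exactly six times, `α2` exactly twice, and
`α3` exactly three times. -/
def Yset (x : Fin 11 → EuclideanSpace ℝ (Fin 10))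
    (C2 : Set (EuclideanSpace ℝ (Fin 10))) : Set (EuclideanSpace ℝ (Fin 10)) :=
  {u | ‖u‖ = 1 ∧ u ∉ C2 ∧
    {i : Fin 11 | ⟪x i, u⟫ = α1}.ncard = 6 ∧
    {i : Fin 11 | ⟪x i, u⟫ = α2}.ncard = 2 ∧
    {i : Fin 11 | ⟪x i, u⟫ = α3}.ncard = 3}

section Aux

open Finset

variable {x : Fin 11 → EuclideanSpace ℝ (Fin 10)}

lemma inner_comb (hx : IsRegularSimplex x) (c : Fin 11 → ℝ) (j : Fin 11) :
    ⟪x j, ∑ i, c i • x i⟫ = (11/10) * c j + (-1/10) * ∑ i, c i := by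
  rw [inner_sum]
  have h1 : ∀ i, ⟪x j, c i • x i⟫ = c i * ⟪x j, x i⟫ := fun i =>
    real_inner_smul_right _ _ _
  simp_rw [h1]
  rw [← Finset.add_sum_erase Finset.univ _ (Finset.mem_univ j)]
  have hjj : ⟪x j, x j⟫ = 1 := by
    rw [real_inner_self_eq_norm_sq, hx.1 j]; norm_num
  have h2 : ∑ i ∈ Finset.univ.erase j, c i * ⟪x j, x i⟫
      = ∑ i ∈ Finset.univ.erase j, c i * (-1/10) := by
    refine Finset.sum_congr rfl fun i hi => ?_
    rw [hx.2 j i (Ne.symm (Finset.mem_erase.mp hi).1)]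
  rw [h2, hjj, ← Finset.sum_mul]
  have h3 : ∑ i ∈ Finset.univ.erase j, c i = (∑ i, c i) - c j := by
    rw [← Finset.add_sum_erase Finset.univ c (Finset.mem_univ j)]; ring
  rw [h3]; ring

lemma sum_x_eq_zero (hx : IsRegularSimplex x) : ∑ i, x i = 0 := by
  have key : ∀ j, ⟪x j, ∑ i, x i⟫ = 0 := by
    intro j
    have h0 : ∑ i, (fun _ : Fin 11 => (1:ℝ)) i • x i = ∑ i, x i := by simp
    rw [← h0, inner_comb hx]
    simp
    norm_num
  have h : ⟪∑ j, x j, ∑ i, x i⟫ = 0 := by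
    rw [sum_inner]
    exact Finset.sum_eq_zero fun j _ => key j
  exact inner_self_eq_zero.mp h

/-- The unique vector with prescribed inner products with the simplex. -/
def wvec (x : Fin 11 → EuclideanSpace ℝ (Fin 10)) (c : Fin 11 → ℝ) :
    EuclideanSpace ℝ (Fin 10) :=
  ∑ i, ((10/11) * c i) • x i

lemma inner_wvec (hx : IsRegularSimplex x) {c : Fin 11 → ℝ}
    (hc : ∑ i, c i = 0) (j : Fin 11) : ⟪x j, wvec x c⟫ = c j := by
  rw [wvec, inner_comb hx]
  rw [← Finset.mul_sum, hc]
  ring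

lemma inner_wvec_self (hx : IsRegularSimplex x) {c : Fin 11 → ℝ}
    (hc : ∑ i, c i = 0) (hc2 : ∑ i, (c i)^2 = 11/10) :
    ⟪wvec x c, wvec x c⟫ = 1 := by
  nth_rewrite 1 [wvec]
  rw [sum_inner]
  have : ∀ i, ⟪((10/11) * c i) • x i, wvec x c⟫ = (10/11) * c i * c i := by
    intro i
    rw [real_inner_smul_left, inner_wvec hx hc]
  rw [Finset.sum_congr rfl fun i _ => this i]
  have : ∑ i, (10/11) * c i * c i = (10/11) * ∑ i, (c i)^2 := by
    rw [Finset.mul_sum]; refine Finset.sum_congr rfl fun i _ => by ring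
  rw [this, hc2]; norm_num

lemma norm_wvec (hx : IsRegularSimplex x) {c : Fin 11 → ℝ}
    (hc : ∑ i, c i = 0) (hc2 : ∑ i, (c i)^2 = 11/10) : ‖wvec x c‖ = 1 := by
  have h := inner_wvec_self hx hc hc2
  rw [real_inner_self_eq_norm_sq] at h
  nlinarith [norm_nonneg (wvec x c)]

lemma eq_wvec (hx : IsRegularSimplex x) {c : Fin 11 → ℝ}
    (hc : ∑ i, c i = 0) (hc2 : ∑ i, (c i)^2 = 11/10)
    {u : EuclideanSpace ℝ (Fin 10)} (hu : ‖u‖ = 1)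
    (hiu : ∀ i, ⟪x i, u⟫ = c i) : u = wvec x c := by
  have h1 : ⟪wvec x c, u⟫ = 1 := by
    rw [wvec, sum_inner]
    have : ∀ i, ⟪((10/11) * c i) • x i, u⟫ = (10/11) * c i * c i := by
      intro i; rw [real_inner_smul_left, hiu]
    rw [Finset.sum_congr rfl fun i _ => this i]
    have : ∑ i, (10/11) * c i * c i = (10/11) * ∑ i, (c i)^2 := by
      rw [Finset.mul_sum]; refine Finset.sum_congr rfl fun i _ => by ring
    rw [this, hc2]; norm_num
  have h2 : ⟪wvec x c, wvec x c⟫ = 1 := inner_wvec_self hx hc hc2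
  have hu2 : ⟪u, u⟫ = 1 := by
    rw [real_inner_self_eq_norm_sq, hu]; norm_num
  have h1' : ⟪u, wvec x c⟫ = 1 := by rw [real_inner_comm]; exact h1
  have hzero : ⟪u - wvec x c, u - wvec x c⟫ = 0 := by
    rw [inner_sub_left, inner_sub_right, inner_sub_right, hu2, h1, h1', h2]
    ring
  have := inner_self_eq_zero.mp hzero
  exact sub_eq_zero.mp this

end Aux
section Aux2

open Finset

variable {x : Fin 11 → EuclideanSpace ℝ (Fin 10)}

/-- Pattern coefficients attached to a pair of disjoint index sets. -/
def beta (A B : Finset (Fin 11)) : Fin 11 → ℝ := fun i =>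
  if i ∈ A then α1 else if i ∈ B then α2 else α3

lemma sum_f_beta (f : ℝ → ℝ) {A B : Finset (Fin 11)}
    (hA : A.card = 6) (hB : B.card = 2) (hd : Disjoint A B) :
    ∑ i, f (beta A B i) = 6 * f α1 + 2 * f α2 + 3 * f α3 := by
  classical
  have hBsub : B ⊆ univ \ A := by
    intro i hi
    simp only [mem_sdiff, mem_univ, true_and]
    exact fun h => (Finset.disjoint_left.mp hd) h hi
  rw [← Finset.sum_sdiff (Finset.subset_univ A)]
  rw [← Finset.sum_sdiff hBsub]
  have e1 : ∑ i ∈ A, f (beta A B i) = ∑ _i ∈ A, f α1 :=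
    Finset.sum_congr rfl fun i hi => by simp [beta, hi]
  have e2 : ∑ i ∈ B, f (beta A B i) = ∑ _i ∈ B, f α2 :=
    Finset.sum_congr rfl fun i hi => by
      have h' : i ∉ A := fun h => (Finset.disjoint_left.mp hd) h hi
      simp [beta, h', hi]
  have e3 : ∑ i ∈ (univ \ A) \ B, f (beta A B i) = ∑ _i ∈ (univ \ A) \ B, f α3 :=
    Finset.sum_congr rfl fun i hi => by
      have h1 : i ∉ A := (Finset.mem_sdiff.mp (Finset.mem_sdiff.mp hi).1).2
      have h2 : i ∉ B := (Finset.mem_sdiff.mp hi).2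
      simp [beta, h1, h2]
  have hcard : ((univ \ A) \ B).card = 3 := by
    rw [Finset.card_sdiff_of_subset hBsub, Finset.card_sdiff_of_subset (subset_univ A)]
    simp [hA, hB]
  rw [e1, e2, e3, Finset.sum_const, Finset.sum_const, Finset.sum_const, hA, hB, hcard]
  simp [nsmul_eq_mul]
  ring

lemma beta_sum0 {A B : Finset (Fin 11)}
    (hA : A.card = 6) (hB : B.card = 2) (hd : Disjoint A B) :
    ∑ i, beta A B i = 0 := by
  have h := sum_f_beta (fun t => t) hA hB hd
  rw [h]
  norm_num [α1, α2, α3]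

lemma beta_sum2 {A B : Finset (Fin 11)}
    (hA : A.card = 6) (hB : B.card = 2) (hd : Disjoint A B) :
    ∑ i, (beta A B i)^2 = 11/10 := by
  have h := sum_f_beta (fun t => t^2) hA hB hd
  rw [h]
  norm_num [α1, α2, α3]

lemma beta_eq_alpha1_iff {A B : Finset (Fin 11)} {i : Fin 11} :
    beta A B i = α1 ↔ i ∈ A := by
  unfold beta
  split_ifs with h1 h2
  · exact iff_of_true rfl h1
  · exact iff_of_false (by norm_num [α1, α2]) h1
  · exact iff_of_false (by norm_num [α1, α3]) h1

lemma beta_eq_alpha2_iff {A B : Finset (Fin 11)} (hd : Disjoint A B) {i : Fin 11} :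
    beta A B i = α2 ↔ i ∈ B := by
  unfold beta
  split_ifs with h1 h2
  · exact iff_of_false (by norm_num [α1, α2]) (fun hB => (Finset.disjoint_left.mp hd) h1 hB)
  · exact iff_of_true rfl h2
  · exact iff_of_false (by norm_num [α2, α3]) h2

lemma beta_eq_alpha3_iff {A B : Finset (Fin 11)} {i : Fin 11} :
    beta A B i = α3 ↔ (i ∉ A ∧ i ∉ B) := by
  unfold beta
  split_ifs with h1 h2
  · exact iff_of_false (by norm_num [α1, α3]) (fun h => h.1 h1)
  · exact iff_of_false (by norm_num [α2, α3]) (fun h => h.2 h2)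
  · exact iff_of_true rfl ⟨h1, h2⟩

/-- The collection of admissible pairs of index sets. -/
def Tpairs : Finset (Finset (Fin 11) × Finset (Fin 11)) :=
  (Finset.univ.powersetCard 6).biUnion fun A =>
    ((Finset.univ \ A).powersetCard 2).image fun B => (A, B)

lemma mem_Tpairs {p : Finset (Fin 11) × Finset (Fin 11)} :
    p ∈ Tpairs ↔ p.1.card = 6 ∧ p.2.card = 2 ∧ Disjoint p.1 p.2 := by
  obtain ⟨A, B⟩ := p
  simp only [Tpairs, Finset.mem_biUnion, Finset.mem_image, Finset.mem_powersetCard]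
  constructor
  · rintro ⟨A', ⟨-, hA'⟩, B', ⟨hB'sub, hB'⟩, heq⟩
    obtain ⟨rfl, rfl⟩ : A' = A ∧ B' = B := by simpa [Prod.ext_iff] using heq
    refine ⟨hA', hB', ?_⟩
    rw [Finset.disjoint_right]
    intro a ha
    exact (Finset.mem_sdiff.mp (hB'sub ha)).2
  · rintro ⟨hA, hB, hd⟩
    exact ⟨A, ⟨Finset.subset_univ _, hA⟩, B,
      ⟨fun i hi => Finset.mem_sdiff.mpr ⟨Finset.mem_univ _, Finset.disjoint_right.mp hd hi⟩, hB⟩,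
      rfl⟩

lemma card_Tpairs : Tpairs.card = 4620 := by
  rw [Tpairs, Finset.card_biUnion]
  · have h : ∀ A ∈ Finset.univ.powersetCard (6 : ℕ),
        (((Finset.univ \ A).powersetCard 2).image fun B => ((A, B) : Finset (Fin 11) × Finset (Fin 11))).card = 10 := by
      intro A hA
      rw [Finset.card_image_of_injective _ (fun B B' h => by simpa using (Prod.ext_iff.mp h).2)]
      rw [Finset.card_powersetCard]
      have hAcard : A.card = 6 := (Finset.mem_powersetCard.mp hA).2
      have h5 : (Finset.univ \ A).card = 5 := by
        rw [Finset.card_sdiff_of_subset (Finset.subset_univ A), hAcard]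
        simp
      rw [h5]
      decide
    rw [Finset.sum_congr rfl h, Finset.sum_const, Finset.card_powersetCard]
    simp only [Finset.card_univ, Fintype.card_fin, smul_eq_mul]
    decide
  · intro A hA A' hA' hne
    simp only [Function.onFun]; rw [Finset.disjoint_left]
    rintro p hp hp'
    simp only [Finset.mem_image] at hp hp'
    obtain ⟨B, -, rfl⟩ := hp
    obtain ⟨B', -, h⟩ := hp'
    exact hne ((Prod.ext_iff.mp h).1).symm

attribute [irreducible] Tpairs

lemma ncard_setOf_eq (p : Fin 11 → Prop) [DecidablePred p] :
    {i | p i}.ncard = (Finset.univ.filter p).card := by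
  rw [← Set.ncard_coe_finset]
  congr 1
  ext i
  simp

noncomputable local instance : DecidableEq (EuclideanSpace ℝ (Fin 10)) :=
  Classical.decEq _

/-- The set of unit vectors whose inner products with the simplex realize the
pattern (6,2,3). -/
def Pset (x : Fin 11 → EuclideanSpace ℝ (Fin 10)) : Set (EuclideanSpace ℝ (Fin 10)) :=
  {u | ‖u‖ = 1 ∧
    {i : Fin 11 | ⟪x i, u⟫ = α1}.ncard = 6 ∧
    {i : Fin 11 | ⟪x i, u⟫ = α2}.ncard = 2 ∧
    {i : Fin 11 | ⟪x i, u⟫ = α3}.ncard = 3}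

lemma Pset_eq (hx : IsRegularSimplex x) :
    Pset x = ↑(Tpairs.image fun p => wvec x (beta p.1 p.2)) := by
  classical
  ext u
  simp only [Pset, Set.mem_setOf_eq, Finset.coe_image, Set.mem_image, Finset.mem_coe]
  constructor
  · rintro ⟨hu, h1, h2, h3⟩
    set A := Finset.univ.filter (fun i => ⟪x i, u⟫ = α1) with hAdef
    set B := Finset.univ.filter (fun i => ⟪x i, u⟫ = α2) with hBdef
    set Cc := Finset.univ.filter (fun i => ⟪x i, u⟫ = α3) with hCdef
    have hA : A.card = 6 := by rw [← ncard_setOf_eq]; exact h1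
    have hB : B.card = 2 := by rw [← ncard_setOf_eq]; exact h2
    have hC : Cc.card = 3 := by rw [← ncard_setOf_eq]; exact h3
    have hdAB : Disjoint A B := by
      rw [Finset.disjoint_left]
      intro i hi hi'
      have e1 := (Finset.mem_filter.mp hi).2
      have e2 := (Finset.mem_filter.mp hi').2
      rw [e1] at e2
      norm_num [α1, α2] at e2
    have hdAC : Disjoint A Cc := by
      rw [Finset.disjoint_left]
      intro i hi hi'
      have e1 := (Finset.mem_filter.mp hi).2
      have e2 := (Finset.mem_filter.mp hi').2
      rw [e1] at e2
      norm_num [α1, α3] at e2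
    have hdBC : Disjoint B Cc := by
      rw [Finset.disjoint_left]
      intro i hi hi'
      have e1 := (Finset.mem_filter.mp hi).2
      have e2 := (Finset.mem_filter.mp hi').2
      rw [e1] at e2
      norm_num [α2, α3] at e2
    have hcover : A ∪ B ∪ Cc = Finset.univ := by
      apply Finset.eq_univ_of_card
      rw [Finset.card_union_of_disjoint (Finset.disjoint_union_left.mpr ⟨hdAC, hdBC⟩),
        Finset.card_union_of_disjoint hdAB, hA, hB, hC]
      simp
    have hbeta : ∀ i, ⟪x i, u⟫ = beta A B i := by
      intro i
      by_cases hiA : i ∈ A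
      · rw [show beta A B i = α1 from by simp [beta, hiA]]
        exact (Finset.mem_filter.mp hiA).2
      · by_cases hiB : i ∈ B
        · rw [show beta A B i = α2 from by simp [beta, hiA, hiB]]
          exact (Finset.mem_filter.mp hiB).2
        · have hiC : i ∈ Cc := by
            have hmem : i ∈ A ∪ B ∪ Cc := hcover ▸ Finset.mem_univ i
            simp only [Finset.mem_union, hiA, hiB, false_or] at hmem
            exact hmem
          rw [show beta A B i = α3 from by simp [beta, hiA, hiB]]
          exact (Finset.mem_filter.mp hiC).2
    exact ⟨(A, B), mem_Tpairs.mpr ⟨hA, hB, hdAB⟩,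
      (eq_wvec hx (beta_sum0 hA hB hdAB) (beta_sum2 hA hB hdAB) hu hbeta).symm⟩
  · rintro ⟨⟨A, B⟩, hp, rfl⟩
    obtain ⟨hA, hB, hd⟩ := mem_Tpairs.mp hp
    have h0 := beta_sum0 hA hB hd
    have h2 := beta_sum2 hA hB hd
    refine ⟨norm_wvec hx h0 h2, ?_, ?_, ?_⟩
    · have hset : {i : Fin 11 | ⟪x i, wvec x (beta A B)⟫ = α1} = ↑A := by
        ext i
        simp only [Set.mem_setOf_eq, inner_wvec hx h0, Finset.mem_coe]
        exact beta_eq_alpha1_iff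
      rw [hset, Set.ncard_coe_finset, hA]
    · have hset : {i : Fin 11 | ⟪x i, wvec x (beta A B)⟫ = α2} = ↑B := by
        ext i
        simp only [Set.mem_setOf_eq, inner_wvec hx h0, Finset.mem_coe]
        exact beta_eq_alpha2_iff hd
      rw [hset, Set.ncard_coe_finset, hB]
    · have hset : {i : Fin 11 | ⟪x i, wvec x (beta A B)⟫ = α3} = ↑(Finset.univ \ (A ∪ B)) := by
        ext i
        simp only [Set.mem_setOf_eq, inner_wvec hx h0, Finset.mem_coe, Finset.mem_sdiff,
          Finset.mem_univ, true_and, Finset.mem_union]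
        rw [beta_eq_alpha3_iff]
        tauto
      rw [hset, Set.ncard_coe_finset, Finset.card_sdiff_of_subset (Finset.subset_univ _),
        Finset.card_union_of_disjoint hd, hA, hB]
      simp
    
lemma card_Pset (hx : IsRegularSimplex x) : (Pset x).ncard = 4620 := by
  rw [Pset_eq hx, Set.ncard_coe_finset, Finset.card_image_of_injOn, card_Tpairs]
  intro p hp q hq hpq
  obtain ⟨hA, hB, hd⟩ := mem_Tpairs.mp hp
  obtain ⟨hA', hB', hd'⟩ := mem_Tpairs.mp hq
  have hpq' : wvec x (beta p.1 p.2) = wvec x (beta q.1 q.2) := hpq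
  have hb : ∀ i, beta p.1 p.2 i = beta q.1 q.2 i := by
    intro i
    rw [← inner_wvec hx (beta_sum0 hA hB hd) i, ← inner_wvec hx (beta_sum0 hA' hB' hd') i, hpq']
  have h1 : p.1 = q.1 := by
    ext i
    rw [← beta_eq_alpha1_iff (A := p.1) (B := p.2), hb i, beta_eq_alpha1_iff]
  have h2 : p.2 = q.2 := by
    ext i
    rw [← beta_eq_alpha2_iff hd, hb i, beta_eq_alpha2_iff hd']
  exact Prod.ext h1 h2

lemma Pset_finite (hx : IsRegularSimplex x) : (Pset x).Finite :=
  (Pset_eq hx) ▸ Finset.finite_toSet _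

lemma clique_subset_Pset (hx : IsRegularSimplex x)
    {C2 : Set (EuclideanSpace ℝ (Fin 10))} (hC2 : IsClique10 x C2) :
    C2 ⊆ Pset x := by
  intro y hy
  obtain ⟨hy1, hy2, h1, h2, h3⟩ := hC2.1 hy
  refine ⟨hy1, ?_, ?_, ?_⟩
  · have hset : {i : Fin 11 | ⟪x i, y⟫ = α1} = {i : Fin 11 | i ≠ 0 ∧ ⟪x i, y⟫ = α1} := by
      ext i
      simp only [Set.mem_setOf_eq]
      constructor
      · intro h
        refine ⟨?_, h⟩
        rintro rfl
        rw [hy2] at h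
        norm_num [α1, α2] at h
      · exact And.right
    rw [hset, h1]
  · have hset : {i : Fin 11 | ⟪x i, y⟫ = α2} = insert 0 {i : Fin 11 | i ≠ 0 ∧ ⟪x i, y⟫ = α2} := by
      ext i
      simp only [Set.mem_setOf_eq, Set.mem_insert_iff]
      constructor
      · intro h
        by_cases hi : i = 0
        · exact Or.inl hi
        · exact Or.inr ⟨hi, h⟩
      · rintro (rfl | ⟨-, h⟩)
        · exact hy2
        · exact h
    rw [hset, Set.ncard_insert_of_notMem (by simp), h2]
  · have hset : {i : Fin 11 | ⟪x i, y⟫ = α3} = {i : Fin 11 | i ≠ 0 ∧ ⟪x i, y⟫ = α3} := by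
      ext i
      simp only [Set.mem_setOf_eq]
      constructor
      · intro h
        refine ⟨?_, h⟩
        rintro rfl
        rw [hy2] at h
        norm_num [α2, α3] at h
      · exact And.right
    rw [hset, h3]

end Aux2

/-- The set `Y` has exactly 4610 elements. -/
theorem card_Yset_eq (x : Fin 11 → EuclideanSpace ℝ (Fin 10))
    (hx : IsRegularSimplex x)
    (C2 : Set (EuclideanSpace ℝ (Fin 10))) (hC2 : IsClique10 x C2) :
    (Yset x C2).ncard = 4610 := by
  have hsub := clique_subset_Pset hx hC2
  have hYeq : Yset x C2 = Pset x \ C2 := by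
    ext u
    simp only [Yset, Pset, Set.mem_setOf_eq, Set.mem_diff]
    tauto
  rw [hYeq, Set.ncard_diff hsub ((Pset_finite hx).subset hsub), card_Pset hx, hC2.2.1]
end
end
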